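/- arXiv:2411.06609 — 2 statements merged into one kernel-verified Lean document; each statement's English description precedes it below -/
import Mathlib

section
/- Let H and Y be complex Hilbert spaces with H separable, let Γ be a bounded self-adjoint nonnegative operator on H, let W : H → Y be a bounded linear operator, and let σ > 0. Let Γ^{1/2} denote the nonnegative self-adjoint square root of Γ, and set S := σ^{−2} Γ^{1/2} W* W Γ^{1/2}, a bounded self-adjoint nonnegative operator on H. Then S + I is invertible in the algebra of bounded operators on H, the operator T := Γ^{1/2} (S + I)^{−1} Γ^{1/2} is self-adjoint and nonnegative, and ⟪T x, x⟫ ≤ ⟪Γ x, x⟫ for every x ∈ H. Consequently, for every Hilbert basis (e_k)_{k∈ℕ} of H one has ∑'_k ⟪T e_k, e_k⟫ ≤ ∑'_k ⟪Γ e_k, e_k⟫; in particular, if Γ is of trace class (∑'_k ⟪Γ e_k, e_k⟫ < ∞) then so is T. -/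
open ComplexInnerProductSpace

/-- **Trace-class property of the posterior covariance.** Let `Γ` be a
bounded self-adjoint nonnegative operator on a separable complex Hilbert
space `H`, with nonnegative self-adjoint square root `R` (`R² = Γ`), let
`W : H → Y` be bounded and `σ > 0`. With
`S := σ⁻² R W* W R`, the operator `S + I` is invertible,
`T := R (S + I)⁻¹ R` is self-adjoint nonnegative, `⟪Tx,x⟫ ≤ ⟪Γx,x⟫` for all
`x`, and for every Hilbert basis `(e_k)` one has
`∑' ⟪T e_k, e_k⟫ ≤ ∑' ⟪Γ e_k, e_k⟫`; in particular `T` is trace class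
whenever `Γ` is. -/
theorem posterior_covariance_trace_class
    {H Y : Type*}
    [NormedAddCommGroup H] [InnerProductSpace ℂ H] [CompleteSpace H]
    [TopologicalSpace.SeparableSpace H]
    [NormedAddCommGroup Y] [InnerProductSpace ℂ Y] [CompleteSpace Y]
    (Γ R : H →L[ℂ] H) (hΓ : Γ.IsPositive) (hR : R.IsPositive)
    (hRsq : R ∘L R = Γ)
    (W : H →L[ℂ] Y) (σ : ℝ) (hσ : 0 < σ) :
    let S : H →L[ℂ] H :=
      ((σ : ℂ) ^ 2)⁻¹ •
        (R ∘L ((ContinuousLinearMap.adjoint W) ∘L (W ∘L R)))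
    let T : H →L[ℂ] H := R ∘L (Ring.inverse (S + 1)) ∘L R
    IsUnit (S + 1) ∧
    T.IsPositive ∧
    (∀ x : H, (⟪T x, x⟫ : ℂ).re ≤ (⟪Γ x, x⟫ : ℂ).re) ∧
    (∀ e : HilbertBasis ℕ ℂ H,
      (∑' k : ℕ, ENNReal.ofReal ((⟪T (e k), e k⟫ : ℂ).re))
          ≤ ∑' k : ℕ, ENNReal.ofReal ((⟪Γ (e k), e k⟫ : ℂ).re) ∧
      ((Summable fun k : ℕ => (⟪Γ (e k), e k⟫ : ℂ).re) →
        Summable fun k : ℕ => (⟪T (e k), e k⟫ : ℂ).re)) := by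
  intro S T
  have hRadj : ContinuousLinearMap.adjoint R = R := hR.isSelfAdjoint.adjoint_eq
  -- positivity of the conjugated piece
  have hWW : (ContinuousLinearMap.adjoint W ∘L W).IsPositive := by
    have := ContinuousLinearMap.isPositive_one (E := Y) (𝕜 := ℂ) |>.adjoint_conj W
    simpa [ContinuousLinearMap.one_def] using this
  have hP : (R ∘L ((ContinuousLinearMap.adjoint W) ∘L (W ∘L R))).IsPositive := by
    have := hWW.conj_adjoint R
    rw [hRadj] at this
    exact this
  -- positivity of S
  have hc : ((σ : ℂ) ^ 2)⁻¹ = (((σ ^ 2)⁻¹ : ℝ) : ℂ) := by push_cast; ring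
  have hcre : (0:ℝ) ≤ (σ ^ 2)⁻¹ := by positivity
  have hS : S.IsPositive := by
    constructor
    · have h1 : IsSelfAdjoint (R ∘L ((ContinuousLinearMap.adjoint W) ∘L (W ∘L R))) :=
        hP.isSelfAdjoint
      refine IsSelfAdjoint.isSymmetric ?_
      show star S = S
      show star (((σ : ℂ) ^ 2)⁻¹ • _) = _
      rw [star_smul, h1.star_eq, hc]
      simp [RCLike.star_def]
      rfl
    · intro x
      have hPx := hP.re_inner_nonneg_left x
      show 0 ≤ (⟪S x, x⟫ : ℂ).re
      have : S x = ((σ : ℂ) ^ 2)⁻¹ • ((R ∘L ((ContinuousLinearMap.adjoint W) ∘L (W ∘L R))) x) :=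
        rfl
      rw [this, inner_smul_left, hc]
      simp only [Complex.conj_ofReal, Complex.mul_re, Complex.ofReal_re, Complex.ofReal_im,
        zero_mul, sub_zero]
      exact mul_nonneg hcre hPx
  have hS' : (0 : H →L[ℂ] H) ≤ S := (ContinuousLinearMap.nonneg_iff_isPositive S).mpr hS
  -- invertibility
  have hUnit : IsUnit (S + 1) :=
    CStarAlgebra.isUnit_of_le 1 (le_add_of_nonneg_left hS') isStrictlyPositive_one
  set u := hUnit.unit with hu
  have huspec : (u : H →L[ℂ] H) = S + 1 := hUnit.unit_spec
  have hinv : Ring.inverse (S + 1) = ((u⁻¹ : (H →L[ℂ] H)ˣ) : H →L[ℂ] H) := by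
    rw [← huspec, Ring.inverse_unit]
  have hu0 : (0 : H →L[ℂ] H) ≤ (u : H →L[ℂ] H) := by
    rw [huspec]; exact add_nonneg hS' zero_le_one
  have hinvnonneg : (0 : H →L[ℂ] H) ≤ ((u⁻¹ : (H →L[ℂ] H)ˣ) : H →L[ℂ] H) :=
    CFC.inv_nonneg_of_nonneg u hu0
  have hinvle : ((u⁻¹ : (H →L[ℂ] H)ˣ) : H →L[ℂ] H) ≤ 1 := by
    rw [CStarAlgebra.inv_le_one_iff_one_le hu0, ← Units.val_le_val, huspec]
    exact le_add_of_nonneg_left hS'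
  have hinvPos : ((u⁻¹ : (H →L[ℂ] H)ˣ) : H →L[ℂ] H).IsPositive :=
    (ContinuousLinearMap.nonneg_iff_isPositive _).mp hinvnonneg
  -- positivity of T
  have hTpos : T.IsPositive := by
    show (R ∘L (Ring.inverse (S + 1)) ∘L R).IsPositive
    rw [hinv]
    have := hinvPos.conj_adjoint R
    rwa [hRadj] at this
  -- T ≤ Γ
  have hTleΓ : T ≤ Γ := by
    have h := star_left_conjugate_le_conjugate hinvle R
    have hstar : star R = R := hR.isSelfAdjoint.star_eq
    rw [hstar, mul_one] at h
    show R ∘L (Ring.inverse (S + 1)) ∘L R ≤ Γ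
    rw [hinv, ← hRsq]
    calc R ∘L ((u⁻¹ : (H →L[ℂ] H)ˣ) : H →L[ℂ] H) ∘L R
        = R * ((u⁻¹ : (H →L[ℂ] H)ˣ) : H →L[ℂ] H) * R := by
          rw [mul_assoc]; rfl
      _ ≤ R * R := h
      _ = R ∘L R := rfl
  have hpt : ∀ x : H, (⟪T x, x⟫ : ℂ).re ≤ (⟪Γ x, x⟫ : ℂ).re := by
    intro x
    have h := (ContinuousLinearMap.le_def T Γ).mp hTleΓ |>.re_inner_nonneg_left x
    rw [ContinuousLinearMap.sub_apply, inner_sub_left, map_sub] at h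
    have h' : (0:ℝ) ≤ (⟪Γ x, x⟫ : ℂ).re - (⟪T x, x⟫ : ℂ).re := h
    linarith
  refine ⟨hUnit, hTpos, hpt, fun e => ?_⟩
  constructor
  · exact ENNReal.tsum_le_tsum fun k => ENNReal.ofReal_le_ofReal (hpt (e k))
  · intro hsum
    exact Summable.of_nonneg_of_le (fun k => hTpos.re_inner_nonneg_left (e k))
      (fun k => hpt (e k)) hsum
end

section
/- Let H be an n-dimensional real inner product space and K a finite-dimensional real inner product space. Let Γ : H → H be a self-adjoint positive definite linear map admitting an orthonormal basis of eigenvectors e_1, …, e_n with Γ e_j = λ_j e_j, λ_j > 0. Let W : H → K be linear, σ > 0, and 1 ≤ N ≤ n, and let P_N denote the orthogonal projection of H onto span{e_1, …, e_N}. Then the linear map σ^{−2} P_N W* W P_N + Γ^{−1} on H is self-adjoint positive definite (hence invertible), the N×N real matrix H̃ + D is positive definite (hence invertible), where H̃_{jk} := σ^{−2} ⟪W e_j, W e_k⟫_K for 1 ≤ j, k ≤ N and D := diag(λ_1^{−1}, …, λ_N^{−1}), and tr[(σ^{−2} P_N W* W P_N + Γ^{−1})^{−1}] = tr[(H̃ +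 D)^{−1}] + ∑_{k=N+1}^{n} λ_k. -/
open RealInnerProductSpace

/-- **Trace of the projected posterior covariance.** Let `H` be an
`n`-dimensional real inner product space with orthonormal eigenbasis `b` of
a self-adjoint positive definite `Γ` (`Γ b_j = λ_j b_j`, `λ_j > 0`, with
inverse `Γinv`), let `W : H → K` be linear, `σ > 0`, `1 ≤ N ≤ n`, and `P_N`
the orthogonal projection onto the span of the first `N` eigenvectors. Then
`σ⁻² P_N W* W P_N + Γ⁻¹` is self-adjoint positive definite (hence
bijective), the `N×N` matrix `H̃ + D` with
`H̃_{jk} = σ⁻²⟪W b_j, W b_k⟫`, `D = diag(λ_j⁻¹)` is positive definite, and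
`tr[(σ⁻² P_N W* W P_N + Γ⁻¹)⁻¹] = tr[(H̃ + D)⁻¹] + ∑_{k=N+1}^n λ_k`. -/
theorem trace_projected_posterior
    {H K : Type*}
    [NormedAddCommGroup H] [InnerProductSpace ℝ H] [FiniteDimensional ℝ H]
    [NormedAddCommGroup K] [InnerProductSpace ℝ K] [FiniteDimensional ℝ K]
    (n N : ℕ) (hN1 : 1 ≤ N) (hNn : N ≤ n)
    (b : OrthonormalBasis (Fin n) ℝ H)
    (Γ Γinv : H →ₗ[ℝ] H) (lam : Fin n → ℝ) (hlam : ∀ j, 0 < lam j)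
    (heig : ∀ j, Γ (b j) = lam j • b j)
    (hΓsym : Γ.IsSymmetric)
    (hΓpos : ∀ x : H, x ≠ 0 → 0 < ⟪Γ x, x⟫)
    (hΓinv1 : Γinv ∘ₗ Γ = LinearMap.id) (hΓinv2 : Γ ∘ₗ Γinv = LinearMap.id)
    (W : H →ₗ[ℝ] K) (σ : ℝ) (hσ : 0 < σ) :
    let P : H →ₗ[ℝ] H :=
      ∑ j ∈ Finset.univ.filter (fun j : Fin n => (j : ℕ) < N),
        (innerₛₗ ℝ (b j)).smulRight (b j)
    let M : H →ₗ[ℝ] H :=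
      (σ ^ 2)⁻¹ • (P ∘ₗ (LinearMap.adjoint W) ∘ₗ W ∘ₗ P) + Γinv
    let Mat : Matrix (Fin N) (Fin N) ℝ :=
      Matrix.of fun j k : Fin N =>
        (σ ^ 2)⁻¹ * ⟪W (b (Fin.castLE hNn j)), W (b (Fin.castLE hNn k))⟫ +
          (if j = k then (lam (Fin.castLE hNn j))⁻¹ else 0)
    M.IsSymmetric ∧
    (∀ x : H, x ≠ 0 → 0 < ⟪M x, x⟫) ∧
    Function.Bijective M ∧
    Mat.PosDef ∧
    (∀ Minv : H →ₗ[ℝ] H,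
      M ∘ₗ Minv = LinearMap.id → Minv ∘ₗ M = LinearMap.id →
      LinearMap.trace ℝ H Minv
        = Matrix.trace Mat⁻¹ +
          ∑ k ∈ Finset.univ.filter (fun k : Fin n => N ≤ (k : ℕ)), lam k) := by
  intro P M Mat
  set c : Fin N → Fin n := Fin.castLE hNn with hc
  have hσ2 : (0:ℝ) < (σ ^ 2)⁻¹ := by positivity
  have inner_bb : ∀ i j : Fin n, ⟪b i, b j⟫ = if i = j then 1 else 0 := fun i j =>
    orthonormal_iff_ite.mp b.orthonormal i j
  -- P basics
  have hPapply : ∀ x : H, P x =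
      ∑ j ∈ Finset.univ.filter (fun j : Fin n => (j : ℕ) < N), ⟪b j, x⟫ • b j := by
    intro x
    simp [P, LinearMap.sum_apply]
  have hPb : ∀ j : Fin n, P (b j) = if (j : ℕ) < N then b j else 0 := by
    intro j
    rw [hPapply]
    rw [Finset.sum_congr rfl (fun i _ => by rw [inner_bb])]
    simp [ite_smul, Finset.sum_ite_eq']
  have hPinner : ∀ (i : Fin n) (x : H), ⟪b i, P x⟫ = if (i : ℕ) < N then ⟪b i, x⟫ else 0 := by
    intro i x
    rw [hPapply, inner_sum]
    rw [Finset.sum_congr rfl (fun j _ => by rw [real_inner_smul_right, inner_bb,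
      show (if i = j then (1:ℝ) else 0) = (if j = i then 1 else 0) by
        by_cases h : i = j <;> simp [h, Ne.symm, eq_comm]])]
    simp [mul_ite, Finset.sum_ite_eq']
  have hPsym : ∀ x y : H, ⟪P x, y⟫ = ⟪x, P y⟫ := by
    intro x y
    rw [hPapply, hPapply, sum_inner, inner_sum]
    refine Finset.sum_congr rfl fun j _ => ?_
    rw [real_inner_smul_left, real_inner_smul_right, ← real_inner_comm x (b j)]
    ring
  -- Γinv basics
  have hinv1 : ∀ x : H, Γinv (Γ x) = x := fun x => LinearMap.ext_iff.mp hΓinv1 x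
  have hinv2 : ∀ x : H, Γ (Γinv x) = x := fun x => LinearMap.ext_iff.mp hΓinv2 x
  have hΓinvb : ∀ j : Fin n, Γinv (b j) = (lam j)⁻¹ • b j := by
    intro j
    have h1 : Γinv (Γ (b j)) = b j := hinv1 _
    rw [heig, map_smul] at h1
    calc Γinv (b j) = (lam j)⁻¹ • (lam j • Γinv (b j)) := by
          rw [smul_smul, inv_mul_cancel₀ (hlam j).ne', one_smul]
      _ = (lam j)⁻¹ • b j := by rw [h1]
  have hΓinvsym : ∀ x y : H, ⟪Γinv x, y⟫ = ⟪x, Γinv y⟫ := by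
    intro x y
    calc ⟪Γinv x, y⟫ = ⟪Γinv x, Γ (Γinv y)⟫ := by rw [hinv2]
      _ = ⟪Γ (Γinv x), Γinv y⟫ := (hΓsym _ _).symm
      _ = ⟪x, Γinv y⟫ := by rw [hinv2]
  -- M basics
  have hMapply : ∀ x : H, M x = (σ ^ 2)⁻¹ • P ((LinearMap.adjoint W) (W (P x))) + Γinv x := by
    intro x
    simp [M, LinearMap.comp_apply]
  have hMinner : ∀ x y : H, ⟪M x, y⟫ = (σ ^ 2)⁻¹ * ⟪W (P x), W (P y)⟫ + ⟪Γinv x, y⟫ := by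
    intro x y
    rw [hMapply, inner_add_left, real_inner_smul_left, hPsym, LinearMap.adjoint_inner_left]
  have hMbge : ∀ j : Fin n, ¬ ((j : ℕ) < N) → M (b j) = (lam j)⁻¹ • b j := by
    intro j hj
    rw [hMapply, hPb, if_neg hj]
    simp [hΓinvb]
  have hMsym : M.IsSymmetric := by
    intro x y
    rw [hMinner, real_inner_comm (M y) x, hMinner y x]
    congr 1
    · congr 1
      exact real_inner_comm _ _
    · rw [hΓinvsym]
      exact real_inner_comm _ _
  have hMpos : ∀ x : H, x ≠ 0 → 0 < ⟪M x, x⟫ := by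
    intro x hx
    rw [hMinner]
    have h1 : 0 ≤ (σ ^ 2)⁻¹ * ⟪W (P x), W (P x)⟫ :=
      mul_nonneg hσ2.le real_inner_self_nonneg
    have hΓx : Γinv x ≠ 0 := by
      intro h
      apply hx
      rw [← hinv2 x, h, map_zero]
    have h2 : 0 < ⟪Γinv x, x⟫ := by
      calc (0:ℝ) < ⟪Γ (Γinv x), Γinv x⟫ := hΓpos _ hΓx
        _ = ⟪Γinv x, x⟫ := by rw [real_inner_comm, hinv2]
    linarith
  have hMinj : Function.Injective M := by
    intro x y hxy
    by_contra hne
    have hsub : M (x - y) = 0 := by rw [map_sub, hxy, sub_self]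
    have := hMpos (x - y) (sub_ne_zero.mpr hne)
    rw [hsub, inner_zero_left] at this
    exact lt_irrefl 0 this
  have hMbij : Function.Bijective M :=
    ⟨hMinj, LinearMap.injective_iff_surjective.mp hMinj⟩
  -- reindexing lemma
  have himg : Finset.univ.filter (fun i : Fin n => (i : ℕ) < N)
      = Finset.image c Finset.univ := by
    ext i
    simp only [Finset.mem_filter, Finset.mem_univ, true_and, Finset.mem_image]
    constructor
    · intro hi
      exact ⟨⟨(i : ℕ), hi⟩, by simp [hc, Fin.ext_iff]⟩
    · rintro ⟨l, -, rfl⟩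
      simpa [hc] using l.isLt
  have hre : ∀ f : Fin n → ℝ,
      ∑ i ∈ Finset.univ.filter (fun i : Fin n => (i : ℕ) < N), f i = ∑ l : Fin N, f (c l) := by
    intro f
    rw [himg, Finset.sum_image (fun a _ a' _ h => Fin.castLE_injective hNn h)]
  -- Mat entries
  have hcb : ∀ j : Fin N, ((c j : Fin n) : ℕ) < N := fun j => by simpa [hc] using j.isLt
  have hMatentry : ∀ j k : Fin N, Mat j k = ⟪b (c j), M (b (c k))⟫ := by
    intro j k
    rw [hMapply, hPb, if_pos (hcb k), inner_add_right, real_inner_smul_right,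
      hPinner, if_pos (hcb j), LinearMap.adjoint_inner_right, hΓinvb,
      real_inner_smul_right, inner_bb]
    have : (if (c j : Fin n) = c k then (1:ℝ) else 0) = if j = k then 1 else 0 := by
      by_cases h : j = k
      · simp [h]
      · rw [if_neg h, if_neg (fun hh => h (Fin.castLE_injective hNn hh))]
    rw [this]
    simp only [Mat, Matrix.of_apply]
    by_cases h : j = k <;> simp [h, hc]
  -- Mat is positive definite
  have hMatPD : Mat.PosDef := by
    refine Matrix.PosDef.of_dotProduct_mulVec_pos ?_ ?_
    · ext j k
      simp only [Matrix.conjTranspose_apply, Mat, Matrix.of_apply, star_trivial]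
      rw [real_inner_comm]
      congr 1
      by_cases h : j = k
      · simp [h]
      · rw [if_neg h, if_neg (Ne.symm h)]
    · intro x hx
      have hstar : star x = x := by
        funext i; simp
      rw [hstar]
      set u : H := ∑ j : Fin N, x j • b (c j) with hu
      have hWu : ⟪W u, W u⟫ = ∑ j : Fin N, ∑ k : Fin N, x j * x k * ⟪W (b (c j)), W (b (c k))⟫ := by
        rw [hu, map_sum, sum_inner]
        refine Finset.sum_congr rfl fun j _ => ?_
        rw [inner_sum]
        refine Finset.sum_congr rfl fun k _ => ?_
        rw [map_smul, map_smul, real_inner_smul_left, real_inner_smul_right]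
        ring
      have hquad : dotProduct x (Mat.mulVec x)
          = (σ ^ 2)⁻¹ * ⟪W u, W u⟫ + ∑ j : Fin N, (lam (c j))⁻¹ * (x j * x j) := by
        rw [hWu, Finset.mul_sum, ← Finset.sum_add_distrib]
        simp only [dotProduct, Matrix.mulVec, Matrix.of_apply, Mat]
        refine Finset.sum_congr rfl fun j _ => ?_
        rw [Finset.mul_sum, Finset.mul_sum]
        rw [Finset.sum_congr rfl (fun k _ => show
          x j * (((σ ^ 2)⁻¹ * ⟪W (b (c j)), W (b (c k))⟫ +
            (if j = k then (lam (c j))⁻¹ else 0)) * x k)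
          = (σ ^ 2)⁻¹ * (x j * x k * ⟪W (b (c j)), W (b (c k))⟫) +
            (if j = k then (lam (c j))⁻¹ * (x j * x k) else 0) from by
          by_cases h : j = k <;> simp [h] <;> ring)]
        rw [Finset.sum_add_distrib]
        congr 1
        rw [Finset.sum_ite_eq Finset.univ j (fun k => (lam (c j))⁻¹ * (x j * x k))]
        simp
      rw [hquad]
      have h1 : 0 ≤ (σ ^ 2)⁻¹ * ⟪W u, W u⟫ := mul_nonneg hσ2.le real_inner_self_nonneg
      have h2 : 0 < ∑ j : Fin N, (lam (c j))⁻¹ * (x j * x j) := by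
        obtain ⟨j, hj⟩ := Function.ne_iff.mp hx
        refine Finset.sum_pos' (fun i _ => mul_nonneg (inv_pos.mpr (hlam _)).le (mul_self_nonneg _)) ⟨j, Finset.mem_univ j, ?_⟩
        exact mul_pos (inv_pos.mpr (hlam _)) (mul_self_pos.mpr hj)
      linarith
  refine ⟨hMsym, hMpos, hMbij, hMatPD, ?_⟩
  -- trace identity
  intro Minv h1 h2
  have hMMinv : ∀ x : H, M (Minv x) = x := fun x => LinearMap.ext_iff.mp h1 x
  have hMinvM : ∀ x : H, Minv (M x) = x := fun x => LinearMap.ext_iff.mp h2 x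
  have hMinvbge : ∀ j : Fin n, ¬ ((j : ℕ) < N) → Minv (b j) = lam j • b j := by
    intro j hj
    have e1 : Minv (M (b j)) = b j := hMinvM _
    rw [hMbge j hj, map_smul] at e1
    calc Minv (b j) = lam j • ((lam j)⁻¹ • Minv (b j)) := by
          rw [smul_smul, mul_inv_cancel₀ (hlam j).ne', one_smul]
      _ = lam j • b j := by rw [e1]
  set C : Matrix (Fin N) (Fin N) ℝ :=
    Matrix.of (fun j k : Fin N => ⟪b (c j), Minv (b (c k))⟫) with hC
  have hMatC : Mat * C = 1 := by
    ext j k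
    have expand : Minv (b (c k)) = ∑ i : Fin n, ⟪b i, Minv (b (c k))⟫ • b i := by
      conv_lhs => rw [← b.sum_repr (Minv (b (c k)))]
      exact Finset.sum_congr rfl fun i _ => by rw [b.repr_apply_apply]
    have key : ⟪b (c j), b (c k)⟫
        = ∑ i : Fin n, ⟪b i, Minv (b (c k))⟫ * ⟪b (c j), M (b i)⟫ := by
      conv_lhs => rw [← hMMinv (b (c k)), expand]
      rw [map_sum, inner_sum]
      exact Finset.sum_congr rfl fun i _ => by rw [map_smul, real_inner_smul_right]
    have hzero : ∀ i ∈ Finset.univ.filter (fun i : Fin n => ¬ ((i : ℕ) < N)),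
        ⟪b i, Minv (b (c k))⟫ * ⟪b (c j), M (b i)⟫ = 0 := by
      intro i hi
      rw [Finset.mem_filter] at hi
      have hne : ¬ ((c j : Fin n) = i) := fun hh => hi.2 (hh ▸ hcb j)
      rw [hMbge i hi.2, real_inner_smul_right, inner_bb, if_neg hne]
      ring
    have key2 : ⟪b (c j), b (c k)⟫ = ∑ l : Fin N, Mat j l * C l k := by
      rw [key, ← Finset.sum_filter_add_sum_filter_not Finset.univ
        (fun i : Fin n => (i : ℕ) < N), Finset.sum_eq_zero hzero, add_zero,
        hre (fun i => ⟪b i, Minv (b (c k))⟫ * ⟪b (c j), M (b i)⟫)]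
      refine Finset.sum_congr rfl fun l _ => ?_
      rw [hMatentry j l, hC]
      simp only [Matrix.of_apply]
      ring
    rw [Matrix.mul_apply, ← key2, inner_bb]
    by_cases h : j = k
    · simp [h, Matrix.one_apply]
    · have hne : ¬ ((c j : Fin n) = c k) := fun hh => h (Fin.castLE_injective hNn hh)
      simp [h, hne, Matrix.one_apply]
  have hCinv : Mat⁻¹ = C := Matrix.inv_eq_right_inv hMatC
  have htr : LinearMap.trace ℝ H Minv = ∑ i : Fin n, ⟪b i, Minv (b i)⟫ := by
    rw [LinearMap.trace_eq_matrix_trace ℝ b.toBasis, Matrix.trace]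
    refine Finset.sum_congr rfl fun i _ => ?_
    rw [Matrix.diag_apply, LinearMap.toMatrix_apply, OrthonormalBasis.coe_toBasis,
      OrthonormalBasis.coe_toBasis_repr_apply, OrthonormalBasis.repr_apply_apply]
  rw [htr, ← Finset.sum_filter_add_sum_filter_not Finset.univ
    (fun i : Fin n => (i : ℕ) < N) (fun i => ⟪b i, Minv (b i)⟫)]
  congr 1
  · rw [hre (fun i => ⟪b i, Minv (b i)⟫), hCinv, Matrix.trace]
    refine Finset.sum_congr rfl fun l _ => ?_
    rw [Matrix.diag_apply, hC]
    simp only [Matrix.of_apply]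
  · rw [Finset.filter_congr (fun i _ => by rw [not_lt])]
    refine Finset.sum_congr rfl fun i hi => ?_
    rw [Finset.mem_filter] at hi
    rw [hMinvbge i (not_lt.mpr hi.2), real_inner_smul_right, inner_bb, if_pos rfl, mul_one]
end
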